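/- Fix a ∈ ℂ. Define Φ_a : ℂ((t)) × H' → End(H' ⊕ ℂ) by Φ_a(f,g)(k,c) = (π'(f·k') + c·(g + a·π'(f')), 0). Then Φ_a is injective, and for all f,h ∈ ℂ((t)) and g,m ∈ H' one has [Φ_a(f,g), Φ_a(h,m)] = Φ_a( f·h' − h·f' , π'(f·m' − h·g') ). In other words, for every a ∈ ℂ the assignment f∂_t + g ↦ (τ(f∂_t), g + a·π'(f')) is an injective Lie algebra homomorphism from the semidirect product Witt ⋉ H' into sp(H') ⋉ H' (the case a = −1/2 is the map σ used for the extended Torelli map). -/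

import Mathlib

open HahnSeries

/-- Formal derivative on Laurent series: `(D f).coeff n = (n+1) * f.coeff (n+1)`. -/
noncomputable def D (f : LaurentSeries ℂ) : LaurentSeries ℂ where
  coeff := fun n => ((n + 1 : ℤ) : ℂ) * f.coeff (n + 1)
  isPWO_support' := by
    have himg : (Function.support fun n : ℤ => ((n + 1 : ℤ) : ℂ) * f.coeff (n + 1)) ⊆
        (fun n : ℤ => n - 1) '' f.support := by
      intro n hn
      have h : f.coeff (n + 1) ≠ 0 := by
        intro h
        simp [Function.mem_support, h] at hn
      exact ⟨n + 1, h, by ring⟩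
    exact (f.isPWO_support.image_of_monotone
      (fun a b hab => by simpa using sub_le_sub_right hab 1)).mono himg

/-- The residue pairing `⟨f,g⟩ = -Res_{t=0}(f·g')`, i.e. minus the coefficient of
`t⁻¹` in `f * D g`. -/
noncomputable def resPair (f g : LaurentSeries ℂ) : ℂ := -((f * D g).coeff (-1))

/-- `H' ⊂ ℂ((t))`: the subspace of Laurent series with zero constant term. -/
noncomputable def Hprime : Submodule ℂ (LaurentSeries ℂ) where
  carrier := {f | f.coeff 0 = 0}
  zero_mem' := by simp
  add_mem' := by
    intro a b ha hb
    simp only [Set.mem_setOf_eq, HahnSeries.coeff_add] at *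
    simp [ha, hb]
  smul_mem' := by
    intro c f hf
    simp only [Set.mem_setOf_eq, HahnSeries.coeff_smul] at *
    simp [hf]

/-- The projection `π' : ℂ((t)) → H'` killing the constant term. -/
noncomputable def proj0 (f : LaurentSeries ℂ) : Hprime :=
  ⟨f - HahnSeries.C (f.coeff 0), by
    have : (f - HahnSeries.C (f.coeff 0)).coeff (0 : ℤ) = 0 := by
      simp [HahnSeries.coeff_sub, HahnSeries.C_apply, HahnSeries.coeff_single_same]
    exact this⟩

/-- `Φ_a : ℂ((t)) × H' → End(H' ⊕ ℂ)`,
`Φ_a(f,g)(k,c) = (π'(f·k') + c·(g + a·π'(f')), 0)`. -/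
noncomputable def Phi (a : ℂ) (f : LaurentSeries ℂ) (g : Hprime) :
    Hprime × ℂ → Hprime × ℂ :=
  fun x => (proj0 (f * D (x.1 : LaurentSeries ℂ)) + x.2 • (g + a • proj0 (D f)), 0)

/-!
`D` is a derivation of `ℂ((t))`: it is `t⁻¹` times the Euler operator `t d/dt`, which multiplies
`tⁿ` by `n` and is a derivation because `n = i + j` on the terms `tⁱ tʲ` of a product. Since `D`
kills constants, `D ∘ π' = D`, so `D` of the first component of `Φ_a(h,m)(k,c)` is
`D(h k') + c (m' + a h'')`. Expanding the commutator, the second-order terms `± f h k''` cancel and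
what is left is `Φ_a` of the Witt bracket, the `a`-terms combining to `a (f h' - h f')'`.
Injectivity: testing `Φ_a(f,g)` on `(tⁿ, 0)` for suitable `n ≠ 0` recovers every coefficient
of `f`, and then `(0, 1)` recovers `g`.
-/

lemma D_coeff (f : LaurentSeries ℂ) (n : ℤ) :
    (D f).coeff n = ((n + 1 : ℤ) : ℂ) * f.coeff (n + 1) := rfl

lemma D_add (f g : LaurentSeries ℂ) : D (f + g) = D f + D g := by
  ext n; simp [D_coeff, mul_add]

lemma D_sub (f g : LaurentSeries ℂ) : D (f - g) = D f - D g := by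
  ext n; simp [D_coeff, mul_sub]

lemma D_smul (c : ℂ) (f : LaurentSeries ℂ) : D (c • f) = c • D f := by
  ext n; simp [D_coeff, mul_left_comm]

lemma D_zero : D 0 = 0 := by
  ext n; simp [D_coeff]

lemma D_C (r : ℂ) : D (C r) = 0 := by
  ext n
  rcases eq_or_ne (n + 1) 0 with h | h
  · simp [D_coeff, h]
  · simp [D_coeff, C_apply, coeff_single_of_ne h]

lemma D_single (n : ℤ) (r : ℂ) :
    D (single n r) = single (n - 1) ((n : ℂ) * r) := by
  ext m
  rcases eq_or_ne m (n - 1) with rfl | hm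
  · simp [D_coeff]
  · simp [D_coeff, coeff_single_of_ne hm, coeff_single_of_ne (show m + 1 ≠ n by omega)]

noncomputable def eulerOp (f : LaurentSeries ℂ) : LaurentSeries ℂ where
  coeff n := (n : ℂ) * f.coeff n
  isPWO_support' := f.isPWO_support.mono fun _ hn => right_ne_zero_of_mul hn

lemma eulerOp_coeff (f : LaurentSeries ℂ) (n : ℤ) : (eulerOp f).coeff n = n * f.coeff n := rfl

lemma support_eulerOp_subset (f : LaurentSeries ℂ) : (eulerOp f).support ⊆ f.support :=
  fun _ hn => right_ne_zero_of_mul hn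

lemma eulerOp_mul (f g : LaurentSeries ℂ) : eulerOp (f * g) = eulerOp f * g + f * eulerOp g := by
  ext n
  rw [coeff_add, coeff_mul_left' f.isPWO_support (support_eulerOp_subset f),
    coeff_mul_right' g.isPWO_support (support_eulerOp_subset g), ← Finset.sum_add_distrib,
    eulerOp_coeff, coeff_mul, Finset.mul_sum]
  refine Finset.sum_congr rfl fun ij hij => ?_
  obtain ⟨-, -, hsum⟩ := Finset.mem_antidiagonal.1 hij
  simp only [eulerOp_coeff, ← hsum]
  push_cast
  ring

lemma D_eq_single_mul_eulerOp (f : LaurentSeries ℂ) : D f = single (-1) 1 * eulerOp f := by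
  ext n
  have h := coeff_single_mul_add (r := (1 : ℂ)) (x := eulerOp f) (a := n + 1) (b := -1)
  rw [add_neg_cancel_right] at h
  rw [h, one_mul, eulerOp_coeff, D_coeff]

lemma D_mul (f g : LaurentSeries ℂ) : D (f * g) = D f * g + f * D g := by
  simp only [D_eq_single_mul_eulerOp, eulerOp_mul]
  ring

lemma proj0_coe (u : LaurentSeries ℂ) : (proj0 u : LaurentSeries ℂ) = u - C (u.coeff 0) := rfl

lemma coeff_proj0 (u : LaurentSeries ℂ) {n : ℤ} (hn : n ≠ 0) :
    (proj0 u : LaurentSeries ℂ).coeff n = u.coeff n := by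
  simp [proj0_coe, C_apply, coeff_single_of_ne hn]

lemma proj0_add (u v : LaurentSeries ℂ) : proj0 (u + v) = proj0 u + proj0 v :=
  Subtype.ext <| by simp only [proj0_coe, Submodule.coe_add, coeff_add, map_add]; abel

lemma proj0_sub (u v : LaurentSeries ℂ) : proj0 (u - v) = proj0 u - proj0 v :=
  Subtype.ext <| by simp only [proj0_coe, Submodule.coe_sub, coeff_sub, map_sub]; abel

lemma proj0_smul (c : ℂ) (u : LaurentSeries ℂ) : proj0 (c • u) = c • proj0 u :=
  Subtype.ext <| by
    simp only [proj0_coe, Submodule.coe_smul, coeff_smul, smul_eq_mul, map_mul, C_mul_eq_smul,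
      smul_sub]

lemma proj0_zero : proj0 0 = 0 := by
  simpa using proj0_smul 0 0

lemma D_proj0 (u : LaurentSeries ℂ) : D (proj0 u) = D u := by
  rw [proj0_coe, D_sub, D_C, sub_zero]

lemma single_mem_Hprime {n : ℤ} (hn : n ≠ 0) (r : ℂ) : single n r ∈ Hprime :=
  coeff_single_of_ne hn.symm

lemma eq_of_forall_proj0_mul_D_eq {f h : LaurentSeries ℂ}
    (H : ∀ k : Hprime, proj0 (f * D k) = proj0 (h * D k)) : f = h := by
  ext p
  obtain ⟨n, hn, hpn⟩ : ∃ n : ℤ, n ≠ 0 ∧ p + (n - 1) ≠ 0 :=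
    if hp : p = -1 then ⟨3, by norm_num, by omega⟩ else ⟨2, by norm_num, by omega⟩
  have key := congrArg (fun k : Hprime => (k : LaurentSeries ℂ).coeff (p + (n - 1)))
    (H ⟨single n 1, single_mem_Hprime hn 1⟩)
  simp only [coeff_proj0 _ hpn, D_single, mul_one, coeff_mul_single_add] at key
  exact mul_right_cancel₀ (Int.cast_ne_zero.mpr hn) key

lemma eq_and_eq_of_Phi_eq (a : ℂ) {f h : LaurentSeries ℂ} {g m : Hprime}
    (H : Phi a f g = Phi a h m) : f = h ∧ g = m := by
  have hfh : f = h := eq_of_forall_proj0_mul_D_eq fun k => by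
    simpa [Phi] using congrArg (fun F => (F (k, 0)).1) H
  subst hfh
  have := congrArg (fun F => (F (0, 1)).1) H
  simp only [Phi, ZeroMemClass.coe_zero, D_zero, mul_zero, proj0_zero, zero_add, one_smul] at this
  exact ⟨rfl, add_right_cancel this⟩

lemma Phi_comp_fst (a : ℂ) (f h : LaurentSeries ℂ) (g m : Hprime) (x : Hprime × ℂ) :
    (Phi a f g (Phi a h m x)).1 = proj0 (f * D (Phi a h m x).1) := by
  simp [Phi]

lemma D_Phi_fst (a : ℂ) (f : LaurentSeries ℂ) (g : Hprime) (x : Hprime × ℂ) :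
    D (Phi a f g x).1 = D (f * D x.1) + x.2 • (D g + a • D (D f)) := by
  simp only [Phi, Submodule.coe_add, Submodule.coe_smul, D_add, D_smul, D_proj0]

lemma commutator_identity (a c : ℂ) (f h g m k : LaurentSeries ℂ) :
    f * (D (h * D k) + c • (D m + a • D (D h))) - h * (D (f * D k) + c • (D g + a • D (D f))) =
      (f * D h - h * D f) * D k + c • ((f * D m - h * D g) + a • D (f * D h - h * D f)) := by
  simp only [D_mul, D_sub, ← C_mul_eq_smul]
  ring

lemma Phi_commutator (a : ℂ) (f h : LaurentSeries ℂ) (g m : Hprime) (x : Hprime × ℂ) :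
    Phi a f g (Phi a h m x) - Phi a h m (Phi a f g x) =
      Phi a (f * D h - h * D f) (proj0 (f * D m - h * D g)) x := by
  refine Prod.ext ?_ (by simp [Phi])
  rw [Prod.fst_sub, Phi_comp_fst, Phi_comp_fst, ← proj0_sub, D_Phi_fst, D_Phi_fst,
    commutator_identity]
  simp only [Phi, proj0_add, proj0_smul]

/-- for every `a ∈ ℂ`, `Φ_a` is injective and sends the bracket of
`Witt ⋉ H'` to the commutator, i.e. `f∂_t + g ↦ (τ(f∂_t), g + a·π'(f'))` is an
injective Lie algebra homomorphism `Witt ⋉ H' → sp(H') ⋉ H' ⊆ End(H' ⊕ ℂ)`. -/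
theorem Phi_injective_lie_hom (a : ℂ) :
    (∀ (f h : LaurentSeries ℂ) (g m : Hprime), Phi a f g = Phi a h m → f = h ∧ g = m) ∧
    (∀ (f h : LaurentSeries ℂ) (g m : Hprime) (x : Hprime × ℂ),
      Phi a f g (Phi a h m x) - Phi a h m (Phi a f g x) =
        Phi a (f * D h - h * D f)
          (proj0 (f * D (m : LaurentSeries ℂ) - h * D (g : LaurentSeries ℂ))) x) :=
  ⟨fun _ _ _ _ => eq_and_eq_of_Phi_eq a, Phi_commutator a⟩
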